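/- arXiv:1410.7755 — 5 statements merged into one kernel-verified Lean document; each statement's English description precedes it below -/
import Mathlib

section
/- If {φ_i}_{i=1}^M is a sequence of unit norm vectors in ℂ^N that is linearly independent with Riesz bounds A and B (i.e., A·Σ|a_i|² ≤ ‖Σ a_iφ_i‖² ≤ B·Σ|a_i|² for all scalars), then the induced outer products {φ_iφ_i*}_{i=1}^M form a Riesz sequence in the space of N×N matrices with the Frobenius norm, with the same Riesz bounds A and B. -/
open scoped BigOperators
open Matrix

/-- The induced outer product `φφ*` of a vector `φ ∈ ℂ^N`. -/
noncomputable def outerProd {N : ℕ} (φ : Fin N → ℂ) : Matrix (Fin N) (Fin N) ℂ :=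
  Matrix.of fun i j => φ i * star (φ j)

/-- The Frobenius inner product `⟨S,T⟩_F = Tr(T* S)`. -/
noncomputable def frob {N : ℕ} (S T : Matrix (Fin N) (Fin N) ℂ) : ℂ :=
  Matrix.trace (T.conjTranspose * S)

/-- The standard inner product on `ℂ^N`. -/
noncomputable def cip {N : ℕ} (φ ψ : Fin N → ℂ) : ℂ :=
  ∑ i, φ i * star (ψ i)

/-!
The `p`-th column of `S = ∑ aᵢ φᵢφᵢ*` is `∑ᵢ aᵢ conj(φᵢ p) φᵢ`, a combination of the `φᵢ` with
coefficients `bₚ i = aᵢ conj(φᵢ p)`. Since `‖S‖_F²` is the sum of the squared norms of the columns,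
applying the Riesz bounds of `{φᵢ}` to each column and summing over `p` gives the Riesz bounds
against `∑ₚ ∑ᵢ |bₚ i|² = ∑ᵢ |aᵢ|² ‖φᵢ‖² = ∑ᵢ |aᵢ|²`.
-/

section

variable {N M : ℕ}

lemma cip_self_re (v : Fin N → ℂ) : (cip v v).re = ∑ p, ‖v p‖ ^ 2 := by
  simp [cip, Complex.re_sum, Complex.mul_conj, Complex.sq_norm]

lemma frob_self_eq_sum_cip_transpose (S : Matrix (Fin N) (Fin N) ℂ) :
    frob S S = ∑ p, cip (Sᵀ p) (Sᵀ p) := by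
  simp only [frob, cip, Matrix.trace, Matrix.diag_apply, Matrix.mul_apply,
    Matrix.conjTranspose_apply, Matrix.transpose_apply]
  exact Finset.sum_congr rfl fun p _ => Finset.sum_congr rfl fun q _ => mul_comm _ _

lemma transpose_sum_smul_outerProd (a : Fin M → ℂ) (φ : Fin M → Fin N → ℂ) (p : Fin N) :
    (∑ i, a i • outerProd (φ i))ᵀ p = ∑ i, (a i * star (φ i p)) • φ i := by
  funext q
  simp only [Matrix.transpose_apply, Matrix.sum_apply, Matrix.smul_apply, outerProd,
    Matrix.of_apply, Finset.sum_apply, Pi.smul_apply, smul_eq_mul]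
  exact Finset.sum_congr rfl fun i _ => by ring

lemma sum_sum_norm_sq_mul_star_of_unit (a : Fin M → ℂ) (φ : Fin M → Fin N → ℂ)
    (hunit : ∀ i, cip (φ i) (φ i) = 1) :
    ∑ p, ∑ i, ‖a i * star (φ i p)‖ ^ 2 = ∑ i, ‖a i‖ ^ 2 := by
  rw [Finset.sum_comm]
  refine Finset.sum_congr rfl fun i _ => ?_
  have hφ : ∑ p, ‖φ i p‖ ^ 2 = 1 := by
    rw [← cip_self_re, hunit i, Complex.one_re]
  simp only [norm_mul, norm_star, mul_pow, ← Finset.mul_sum, hφ, mul_one]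

end

theorem stmt_4_general {N M : ℕ} (φ : Fin M → Fin N → ℂ) (A B : ℝ)
    (hunit : ∀ i, cip (φ i) (φ i) = 1)
    (hriesz : ∀ a : Fin M → ℂ,
      A * ∑ i, ‖a i‖ ^ 2 ≤ (cip (∑ i, a i • φ i) (∑ i, a i • φ i)).re ∧
      (cip (∑ i, a i • φ i) (∑ i, a i • φ i)).re ≤ B * ∑ i, ‖a i‖ ^ 2) :
    ∀ a : Fin M → ℂ,
      A * ∑ i, ‖a i‖ ^ 2 ≤
        (frob (∑ i, a i • outerProd (φ i)) (∑ i, a i • outerProd (φ i))).re ∧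
      (frob (∑ i, a i • outerProd (φ i)) (∑ i, a i • outerProd (φ i))).re ≤
        B * ∑ i, ‖a i‖ ^ 2 := by
  intro a
  set b : Fin N → Fin M → ℂ := fun p i => a i * star (φ i p)
  have hfrob : (frob (∑ i, a i • outerProd (φ i)) (∑ i, a i • outerProd (φ i))).re =
      ∑ p, (cip (∑ i, b p i • φ i) (∑ i, b p i • φ i)).re := by
    simp only [frob_self_eq_sum_cip_transpose, transpose_sum_smul_outerProd, Complex.re_sum, b]
  have hmass (C : ℝ) : ∑ p, C * ∑ i, ‖b p i‖ ^ 2 = C * ∑ i, ‖a i‖ ^ 2 := by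
    rw [← Finset.mul_sum, sum_sum_norm_sq_mul_star_of_unit a φ hunit]
  rw [hfrob, ← hmass A, ← hmass B]
  exact ⟨Finset.sum_le_sum fun p _ => (hriesz (b p)).1,
    Finset.sum_le_sum fun p _ => (hriesz (b p)).2⟩

theorem stmt_4 {N M : ℕ} (φ : Fin M → Fin N → ℂ) (A B : ℝ)
    (hA : 0 < A)
    (hunit : ∀ i, cip (φ i) (φ i) = 1)
    (hriesz : ∀ a : Fin M → ℂ,
      A * ∑ i, ‖a i‖ ^ 2 ≤ (cip (∑ i, a i • φ i) (∑ i, a i • φ i)).re ∧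
      (cip (∑ i, a i • φ i) (∑ i, a i • φ i)).re ≤ B * ∑ i, ‖a i‖ ^ 2) :
    ∀ a : Fin M → ℂ,
      A * ∑ i, ‖a i‖ ^ 2 ≤
        (frob (∑ i, a i • outerProd (φ i)) (∑ i, a i • outerProd (φ i))).re ∧
      (frob (∑ i, a i • outerProd (φ i)) (∑ i, a i • outerProd (φ i))).re ≤
        B * ∑ i, ‖a i‖ ^ 2 :=
  stmt_4_general φ A B hunit hriesz
end

section
/- Let {φ_i}_{i=1}^M be a frame for ℂ^N with no zero vectors, and for each coordinate k = 1,…,N let I_k = {i : φ_i(k) ≠ 0}. If for every k the subfamily {φ_i}_{i ∈ I_k} is linearly independent, then the induced outer products {φ_iφ_i*}_{i=1}^M are linearly independent. -/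
open scoped BigOperators
open Matrix

theorem stmt_6 {N M : ℕ} (φ : Fin M → Fin N → ℂ)
    (hframe : Submodule.span ℂ (Set.range φ) = ⊤)
    (hnz : ∀ i, φ i ≠ 0)
    (hind : ∀ k : Fin N, LinearIndependent ℂ fun i : {i : Fin M // φ i k ≠ 0} => φ i.1) :
    LinearIndependent ℝ fun i => outerProd (φ i) := by
  classical
  rw [Fintype.linearIndependent_iff]
  intro g hg i₀
  -- pick a coordinate where φ i₀ is nonzero
  obtain ⟨k, hk⟩ : ∃ k, φ i₀ k ≠ 0 := by
    by_contra h
    push_neg at h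
    exact hnz i₀ (funext h)
  -- entrywise equation
  have h0 : ∀ j : Fin N, ∑ i, ((g i : ℂ) * star (φ i k)) * φ i j = 0 := by
    intro j
    have := congrFun (congrFun hg j) k
    simp only [Matrix.sum_apply, Matrix.smul_apply, outerProd, Matrix.of_apply,
      Matrix.zero_apply, Pi.zero_apply] at this ⊢
    rw [← this]
    apply Finset.sum_congr rfl
    intro i _
    push_cast [Complex.real_smul]
    ring
  set c : {i : Fin M // φ i k ≠ 0} → ℂ := fun i => (g i.1 : ℂ) * star (φ i.1 k) with hc
  have key : ∑ i : {i : Fin M // φ i k ≠ 0}, c i • φ i.1 = 0 := by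
    have h1 : ∑ i : {i : Fin M // φ i k ≠ 0}, c i • φ i.1
        = ∑ i ∈ Finset.univ.filter (fun i => φ i k ≠ 0),
            ((g i : ℂ) * star (φ i k)) • φ i := by
      rw [Finset.sum_subtype (p := fun i => φ i k ≠ 0)
        (Finset.univ.filter (fun i => φ i k ≠ 0))
        (fun i => by simp) (fun i => ((g i : ℂ) * star (φ i k)) • φ i)]
    have h2 : ∑ i ∈ Finset.univ.filter (fun i => φ i k ≠ 0),
        ((g i : ℂ) * star (φ i k)) • φ i
        = ∑ i, ((g i : ℂ) * star (φ i k)) • φ i := by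
      apply Finset.sum_filter_of_ne
      intro i _ hne hzero
      apply hne
      simp [hzero]
    rw [h1, h2]
    funext j
    simpa using h0 j
  have := Fintype.linearIndependent_iff.mp (hind k) c key ⟨i₀, hk⟩
  have : (g i₀ : ℂ) = 0 := by
    rcases mul_eq_zero.mp this with h | h
    · exact h
    · exact absurd (star_eq_zero.mp h) hk
  exact_mod_cast this
end

section
/- If {φ_i}_{i=1}^M is a unit norm frame for ℂ^N, then the largest eigenvalue of the matrix G = [|⟨φ_i, φ_j⟩|²]_{i,j=1}^M is at least M/N. Moreover, equality holds if and only if {φ_i}_{i=1}^M is a tight frame (i.e., Σ_i |⟨ψ, φ_i⟩|² = (M/N)‖ψ‖² for all ψ). -/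
/-!
The frame operator `S = ∑ φᵢφᵢ*` has trace `M` and Frobenius norm squared equal to the frame
potential `FP = ∑ᵢⱼ Gᵢⱼ`, so `0 ≤ ‖S - (M/N) I‖²_F = FP - M²/N`, with equality iff the frame is
tight. On the other hand `FP = 𝟙ᵀ G 𝟙 ≤ λ_max ‖𝟙‖² = λ_max M`, which gives `λ_max ≥ M/N`, and
`λ_max = M/N` forces `FP ≤ M²/N`, hence tightness. Conversely, for a tight unit norm frame every
row of the nonnegative matrix `G` sums to `M/N`, so Gershgorin's theorem bounds the eigenvalues
by `M/N`.
-/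

open scoped BigOperators
open Matrix

open scoped ComplexOrder MatrixOrder

lemma Matrix.trace_conjTranspose_mul_self_sub_smul_one {𝕜 n : Type*} [RCLike 𝕜] [Fintype n]
    [DecidableEq n] {A : Matrix n n 𝕜} (hA : A.IsHermitian) (c : ℝ) :
    trace ((A - (c : 𝕜) • 1)ᴴ * (A - (c : 𝕜) • 1)) =
      trace (A * A) - 2 * c * trace A + c ^ 2 * Fintype.card n := by
  rw [conjTranspose_sub, hA.eq, conjTranspose_smul, conjTranspose_one, RCLike.star_def,
    RCLike.conj_ofReal]
  simp only [sub_mul, mul_sub, Matrix.smul_mul, Matrix.mul_smul, one_mul, mul_one, trace_sub,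
    trace_smul, trace_one, smul_eq_mul]
  ring

lemma Matrix.IsHermitian.star_dotProduct_mulVec_le {𝕜 n : Type*} [RCLike 𝕜] [Fintype n]
    [DecidableEq n] [Nonempty n] {A : Matrix n n 𝕜} (hA : A.IsHermitian) (x : n → 𝕜) :
    star x ⬝ᵥ A *ᵥ x ≤
      ((Finset.univ.sup' Finset.univ_nonempty hA.eigenvalues : ℝ) : 𝕜) * (star x ⬝ᵥ x) := by
  have hle : A ≤ algebraMap ℝ (Matrix n n 𝕜)
      (Finset.univ.sup' Finset.univ_nonempty hA.eigenvalues) := by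
    refine le_algebraMap_of_spectrum_le (fun μ hμ => ?_) hA
    obtain ⟨k, rfl⟩ := hA.spectrum_real_eq_range_eigenvalues ▸ hμ
    exact Finset.le_sup' _ (Finset.mem_univ k)
  simpa [sub_mulVec, Algebra.algebraMap_eq_smul_one, dotProduct_sub, sub_nonneg, smul_mulVec,
    dotProduct_smul] using (Matrix.le_iff.mp hle).dotProduct_mulVec_nonneg x

lemma Matrix.le_of_mem_spectrum_of_nonneg_of_sum_le {n : Type*} [Fintype n] [DecidableEq n]
    {A : Matrix n n ℝ} {μ r : ℝ} (hA : ∀ i j, 0 ≤ A i j) (hrow : ∀ i, ∑ j, A i j ≤ r)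
    (hμ : μ ∈ spectrum ℝ A) : μ ≤ r := by
  rw [← spectrum_toLin', ← Module.End.hasEigenvalue_iff_mem_spectrum] at hμ
  obtain ⟨k, hk⟩ := eigenvalue_mem_ball hμ
  rw [Metric.mem_closedBall, Real.dist_eq] at hk
  simp only [Real.norm_of_nonneg (hA k _)] at hk
  linarith [le_abs_self (μ - A k k), hrow k,
    Finset.add_sum_erase Finset.univ (A k) (Finset.mem_univ k)]

section InnerProduct

variable {N : ℕ}

lemma star_cip (φ ψ : Fin N → ℂ) : star (cip φ ψ) = cip ψ φ := by
  simp only [cip, star_sum, star_mul', star_star, mul_comm]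

lemma ofReal_norm_cip_sq (φ ψ : Fin N → ℂ) :
    ((‖cip φ ψ‖ ^ 2 : ℝ) : ℂ) = cip φ ψ * cip ψ φ := by
  rw [← star_cip φ ψ, Complex.star_def, Complex.mul_conj', Complex.ofReal_pow]

lemma cip_smul_left (c : ℂ) (ψ χ : Fin N → ℂ) : cip (c • ψ) χ = c * cip ψ χ := by
  simp only [cip, Pi.smul_apply, smul_eq_mul, Finset.mul_sum, mul_assoc]

end InnerProduct

section Frame

variable {ι : Type*} [Fintype ι] {N : ℕ} (φ : ι → Fin N → ℂ)

noncomputable def frameOperator : Matrix (Fin N) (Fin N) ℂ := ∑ i, outerProd (φ i)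

noncomputable def framePotential : ℝ := ∑ i, ∑ j, ‖cip (φ i) (φ j)‖ ^ 2

lemma frameOperator_apply (k l : Fin N) :
    frameOperator φ k l = ∑ i, φ i k * star (φ i l) := by
  simp [frameOperator, outerProd, Matrix.sum_apply]

lemma isHermitian_frameOperator : (frameOperator φ).IsHermitian := by
  ext k l
  simp [frameOperator_apply, star_sum, mul_comm]

lemma cip_frameOperator_mulVec (ψ χ : Fin N → ℂ) :
    cip (frameOperator φ *ᵥ ψ) χ = ∑ i, cip ψ (φ i) * cip (φ i) χ := by
  simp only [cip, mulVec, dotProduct, frameOperator_apply, Finset.sum_mul, Finset.mul_sum]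
  conv_rhs => rw [Finset.sum_comm]
  refine Finset.sum_congr rfl fun k _ => ?_
  conv_rhs => rw [Finset.sum_comm]
  exact Finset.sum_congr rfl fun l _ => Finset.sum_congr rfl fun i _ => by ring

lemma ofReal_sum_norm_cip_sq (ψ : Fin N → ℂ) :
    (↑(∑ i, ‖cip ψ (φ i)‖ ^ 2 : ℝ) : ℂ) = cip (frameOperator φ *ᵥ ψ) ψ := by
  simp only [Complex.ofReal_sum, ofReal_norm_cip_sq, cip_frameOperator_mulVec]

lemma trace_mul_frameOperator (A : Matrix (Fin N) (Fin N) ℂ) :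
    trace (A * frameOperator φ) = ∑ i, cip (A *ᵥ φ i) (φ i) := by
  simp only [trace, diag, mul_apply, frameOperator_apply, cip, mulVec, dotProduct,
    Finset.mul_sum, Finset.sum_mul]
  conv_rhs => rw [Finset.sum_comm]
  refine Finset.sum_congr rfl fun k _ => ?_
  conv_rhs => rw [Finset.sum_comm]
  exact Finset.sum_congr rfl fun l _ => Finset.sum_congr rfl fun i _ => by ring

lemma ofReal_framePotential :
    (framePotential φ : ℂ) = trace (frameOperator φ * frameOperator φ) := by
  simp only [framePotential, trace_mul_frameOperator, ← ofReal_sum_norm_cip_sq,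
    Complex.ofReal_sum]

lemma trace_frameOperator : trace (frameOperator φ) = ∑ i, cip (φ i) (φ i) := by
  simpa using trace_mul_frameOperator φ 1

lemma sum_norm_cip_sq_of_frameOperator_eq_smul_one {c : ℝ}
    (hS : frameOperator φ = (c : ℂ) • 1) (ψ : Fin N → ℂ) :
    ∑ i, ‖cip ψ (φ i)‖ ^ 2 = c * (cip ψ ψ).re := by
  have h := congrArg Complex.re (ofReal_sum_norm_cip_sq φ ψ)
  rwa [Complex.ofReal_re, hS, smul_mulVec, one_mulVec, cip_smul_left, Complex.re_ofReal_mul]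
    at h

variable [NeZero N] {φ} (hunit : ∀ i, cip (φ i) (φ i) = 1)
include hunit

lemma ofReal_framePotential_sub_sq_card_div :
    ((framePotential φ - (Fintype.card ι : ℝ) ^ 2 / N : ℝ) : ℂ) =
      trace ((frameOperator φ - ((Fintype.card ι / N : ℝ) : ℂ) • 1)ᴴ *
        (frameOperator φ - ((Fintype.card ι / N : ℝ) : ℂ) • 1)) := by
  have h := trace_conjTranspose_mul_self_sub_smul_one (isHermitian_frameOperator φ)
    (Fintype.card ι / N : ℝ)
  rw [RCLike.ofReal_eq_complex_ofReal] at h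
  rw [h, ← ofReal_framePotential, trace_frameOperator, Finset.sum_congr rfl fun i _ => hunit i]
  have hN : (N : ℂ) ≠ 0 := Nat.cast_ne_zero.mpr (NeZero.ne N)
  push_cast
  simp only [Finset.sum_const, Finset.card_univ, nsmul_eq_mul, mul_one, Fintype.card_fin]
  field_simp
  ring

lemma sq_card_div_le_framePotential : (Fintype.card ι : ℝ) ^ 2 / N ≤ framePotential φ := by
  have h := (posSemidef_conjTranspose_mul_self
    (frameOperator φ - ((Fintype.card ι / N : ℝ) : ℂ) • 1)).trace_nonneg
  rw [← ofReal_framePotential_sub_sq_card_div hunit, Complex.zero_le_real] at h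
  linarith

lemma frameOperator_eq_smul_one_of_framePotential_le
    (h : framePotential φ ≤ (Fintype.card ι : ℝ) ^ 2 / N) :
    frameOperator φ = ((Fintype.card ι / N : ℝ) : ℂ) • 1 := by
  rw [← sub_eq_zero, ← trace_conjTranspose_mul_self_eq_zero_iff,
    ← ofReal_framePotential_sub_sq_card_div hunit,
    le_antisymm h (sq_card_div_le_framePotential hunit), sub_self, Complex.ofReal_zero]

end Frame

theorem stmt_8_general {N M : ℕ} [NeZero N] [NeZero M] (φ : Fin M → Fin N → ℂ)
    (hunit : ∀ i, cip (φ i) (φ i) = 1)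
    (G : Matrix (Fin M) (Fin M) ℝ)
    (hGdef : ∀ i j, G i j = ‖cip (φ i) (φ j)‖ ^ 2)
    (hG : G.IsHermitian) :
    (M : ℝ) / N ≤ Finset.univ.sup' Finset.univ_nonempty hG.eigenvalues ∧
    (Finset.univ.sup' Finset.univ_nonempty hG.eigenvalues = (M : ℝ) / N ↔
      ∀ ψ : Fin N → ℂ, ∑ i, ‖cip ψ (φ i)‖ ^ 2 = ((M : ℝ) / N) * (cip ψ ψ).re) := by
  set lam := Finset.univ.sup' Finset.univ_nonempty hG.eigenvalues
  have hM : (0 : ℝ) < M := Nat.cast_pos.mpr (Nat.pos_of_neZero M)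
  have hupper : framePotential φ ≤ lam * M := by
    simpa [framePotential, hGdef, dotProduct, mulVec] using
      hG.star_dotProduct_mulVec_le (fun _ => 1)
  have hlower : (M : ℝ) ^ 2 / N ≤ framePotential φ := by
    simpa using sq_card_div_le_framePotential hunit
  have hbound : (M : ℝ) / N ≤ lam := by
    refine le_of_mul_le_mul_right ?_ hM
    calc (M : ℝ) / N * M = M ^ 2 / N := by ring
      _ ≤ lam * M := hlower.trans hupper
  refine ⟨hbound, fun heq ψ => ?_, fun htight => le_antisymm ?_ hbound⟩
  · have hS := frameOperator_eq_smul_one_of_framePotential_le hunit <| by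
      rw [Fintype.card_fin]
      exact hupper.trans_eq (by rw [heq]; ring)
    simpa using sum_norm_cip_sq_of_frameOperator_eq_smul_one φ hS ψ
  · refine Finset.sup'_le _ _ fun k _ => le_of_mem_spectrum_of_nonneg_of_sum_le
      (fun i j => by rw [hGdef]; positivity) (fun i => ?_) (hG.eigenvalues_mem_spectrum_real k)
    simp [hGdef, htight (φ i), hunit i]

theorem stmt_8 {N M : ℕ} [NeZero N] [NeZero M] (φ : Fin M → Fin N → ℂ)
    (hunit : ∀ i, cip (φ i) (φ i) = 1)
    (hframe : Submodule.span ℂ (Set.range φ) = ⊤)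
    (G : Matrix (Fin M) (Fin M) ℝ)
    (hGdef : ∀ i j, G i j = ‖cip (φ i) (φ j)‖ ^ 2)
    (hG : G.IsHermitian) :
    (M : ℝ) / N ≤ Finset.univ.sup' Finset.univ_nonempty hG.eigenvalues ∧
    (Finset.univ.sup' Finset.univ_nonempty hG.eigenvalues = (M : ℝ) / N ↔
      ∀ ψ : Fin N → ℂ, ∑ i, ‖cip ψ (φ i)‖ ^ 2 = ((M : ℝ) / N) * (cip ψ ψ).re) :=
  stmt_8_general φ hunit G hGdef hG
end

section
/- If {φ_i}_{i=1}^M is a unit norm frame for ℂ^N whose induced outer products are linearly independent, then the smallest eigenvalue of the Gram matrix G = [|⟨φ_i,φ_j⟩|²] is at most M(N−1)/(N(M−1)). -/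
open scoped BigOperators
open Matrix

/-!
The diagonal of `G` is `1`, so its eigenvalues sum to `M`. Testing `G` against the all-ones
vector gives `λ_max · M ≥ ∑ᵢⱼ |⟨φᵢ, φⱼ⟩|²`, the frame potential. The frame potential is also the
squared Frobenius norm of the frame operator `S = ∑ᵢ φᵢ φᵢ*`, whose trace is `M`, so Cauchy–Schwarz
on the diagonal of `S` bounds it below by `M² / N`. Hence `λ_max ≥ M / N`, and the other `M - 1`
eigenvalues, each at least `λ_min`, sum to `M - λ_max`.
-/

open Finset

namespace Matrix

variable {m n 𝕜 : Type*} [Fintype m] [Fintype n] [RCLike 𝕜]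

lemma trace_mul_conjTranspose_eq_sum_sq_norm (A : Matrix m n 𝕜) :
    (A * Aᴴ).trace = ∑ i, ∑ j, (‖A i j‖ : 𝕜) ^ 2 := by
  refine sum_congr rfl fun i _ => sum_congr rfl fun j _ => ?_
  simp [RCLike.mul_conj]

lemma sum_sq_norm_mul_conjTranspose_eq (A : Matrix m n 𝕜) :
    ∑ i, ∑ j, ‖(A * Aᴴ) i j‖ ^ 2 = ∑ a, ∑ b, ‖(Aᴴ * A) a b‖ ^ 2 := by
  -- both sides are `tr ((A Aᴴ)²) = tr ((Aᴴ A)²)`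
  apply RCLike.ofReal_injective (K := 𝕜)
  push_cast
  rw [← trace_mul_conjTranspose_eq_sum_sq_norm, ← trace_mul_conjTranspose_eq_sum_sq_norm,
    conjTranspose_mul, conjTranspose_conjTranspose, conjTranspose_mul,
    conjTranspose_conjTranspose, Matrix.mul_assoc, trace_mul_comm]
  simp only [Matrix.mul_assoc]

lemma sq_re_trace_le_card_mul_sum_sq_norm (P : Matrix n n 𝕜) :
    RCLike.re P.trace ^ 2 ≤ Fintype.card n * ∑ a, ∑ b, ‖P a b‖ ^ 2 := by
  have hdiag : ∀ a, RCLike.re (P a a) ^ 2 ≤ ∑ b, ‖P a b‖ ^ 2 := fun a =>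
    calc RCLike.re (P a a) ^ 2 ≤ ‖P a a‖ ^ 2 := by
          rw [sq_le_sq, abs_norm]; exact RCLike.abs_re_le_norm _
      _ ≤ ∑ b, ‖P a b‖ ^ 2 := single_le_sum (fun b _ => sq_nonneg ‖P a b‖) (mem_univ a)
  calc RCLike.re P.trace ^ 2 = (∑ a, RCLike.re (P a a)) ^ 2 := by
        rw [trace, map_sum]; rfl
    _ ≤ Fintype.card n * ∑ a, RCLike.re (P a a) ^ 2 := sq_sum_le_card_mul_sum_sq
    _ ≤ Fintype.card n * ∑ a, ∑ b, ‖P a b‖ ^ 2 := by gcongr with a; exact hdiag a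

lemma sq_re_trace_mul_conjTranspose_le (A : Matrix m n 𝕜) :
    RCLike.re (A * Aᴴ).trace ^ 2 ≤ Fintype.card n * ∑ i, ∑ j, ‖(A * Aᴴ) i j‖ ^ 2 := by
  rw [trace_mul_comm, sum_sq_norm_mul_conjTranspose_eq]
  exact sq_re_trace_le_card_mul_sum_sq_norm _

lemma IsHermitian.re_star_dotProduct_mulVec_le [DecidableEq n] {A : Matrix n n 𝕜}
    (hA : A.IsHermitian) {c : ℝ} (hc : ∀ i, hA.eigenvalues i ≤ c) (x : n → 𝕜) :
    RCLike.re (star x ⬝ᵥ A *ᵥ x) ≤ c * ∑ i, ‖x i‖ ^ 2 := by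
  set b := hA.eigenvectorBasis
  set y : EuclideanSpace 𝕜 n := WithLp.toLp 2 x
  have heig : ∀ k, inner 𝕜 (b k) (WithLp.toLp 2 (A *ᵥ x)) =
      hA.eigenvalues k * inner 𝕜 (b k) y := by
    intro k
    have hrow : star ⇑(b k) ᵥ* A = star (A *ᵥ ⇑(b k)) := by rw [star_mulVec, hA.eq]
    simp only [EuclideanSpace.inner_eq_star_dotProduct, y]
    rw [dotProduct_comm, dotProduct_mulVec, hrow, hA.mulVec_eigenvectorBasis, star_smul,
      smul_dotProduct, dotProduct_comm]
    simp [b, RCLike.real_smul_eq_coe_mul]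
  have hquad : star x ⬝ᵥ A *ᵥ x =
      ∑ k, (hA.eigenvalues k : 𝕜) * (‖inner 𝕜 (b k) y‖ ^ 2 : ℝ) := by
    rw [dotProduct_comm, ← EuclideanSpace.inner_toLp_toLp, ← b.sum_inner_mul_inner]
    refine sum_congr rfl fun k _ => ?_
    rw [heig, mul_left_comm, ← inner_conj_symm, RCLike.conj_mul, RCLike.ofReal_pow]
  have hnorm : ∑ i, ‖x i‖ ^ 2 = ∑ k, ‖inner 𝕜 (b k) y‖ ^ 2 := by
    rw [b.sum_sq_norm_inner_right, EuclideanSpace.norm_sq_eq]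
  rw [hquad, hnorm, mul_sum, map_sum]
  refine sum_le_sum fun k _ => ?_
  rw [← RCLike.ofReal_mul, RCLike.ofReal_re]
  exact mul_le_mul_of_nonneg_right (hc k) (sq_nonneg _)

end Matrix

lemma card_sub_one_mul_inf'_le_sum_sub {ι : Type*} [Fintype ι] [DecidableEq ι]
    (h : (univ : Finset ι).Nonempty) (f : ι → ℝ) (k : ι) :
    ((Fintype.card ι : ℝ) - 1) * univ.inf' h f ≤ ∑ i, f i - f k := by
  have hcard : (((univ : Finset ι).erase k).card : ℝ) = Fintype.card ι - 1 := by
    rw [card_erase_of_mem (mem_univ k), Nat.cast_sub h.card_pos, Nat.cast_one, card_univ]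
  rw [← add_sum_erase _ _ (mem_univ k), add_sub_cancel_left, ← hcard, ← nsmul_eq_mul,
    ← sum_const]
  exact sum_le_sum fun i _ => inf'_le f (mem_univ i)

lemma sq_sum_re_cip_le {ι : Type*} [Fintype ι] {N : ℕ} (φ : ι → Fin N → ℂ) :
    (∑ i, (cip (φ i) (φ i)).re) ^ 2 ≤ N * ∑ i, ∑ j, ‖cip (φ i) (φ j)‖ ^ 2 := by
  have hgram : ∀ i j, (of φ * (of φ)ᴴ) i j = cip (φ i) (φ j) := fun _ _ => rfl
  simpa only [trace, Matrix.diag, hgram, map_sum, RCLike.re_to_complex, Fintype.card_fin] using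
    sq_re_trace_mul_conjTranspose_le (of φ)

theorem stmt_9_general {N M : ℕ} [NeZero N] [NeZero M] (hM : 1 < M) (φ : Fin M → Fin N → ℂ)
    (hunit : ∀ i, cip (φ i) (φ i) = 1)
    (G : Matrix (Fin M) (Fin M) ℝ)
    (hGdef : ∀ i j, G i j = ‖cip (φ i) (φ j)‖ ^ 2)
    (hG : G.IsHermitian) :
    Finset.univ.inf' Finset.univ_nonempty hG.eigenvalues ≤
      (M : ℝ) * ((N : ℝ) - 1) / ((N : ℝ) * ((M : ℝ) - 1)) := by
  have hdiag : ∀ i, G i i = 1 := fun i => by rw [hGdef, hunit, norm_one, one_pow]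
  have htrace : ∑ k, hG.eigenvalues k = M := by
    simpa [trace, hdiag] using hG.trace_eq_sum_eigenvalues.symm
  have hpotential : (M : ℝ) ^ 2 ≤ N * ∑ i, ∑ j, G i j := by
    simpa [hunit, hGdef] using sq_sum_re_cip_le φ
  obtain ⟨k, -, hk⟩ := exists_max_image univ hG.eigenvalues univ_nonempty
  have hmax : ∑ i, ∑ j, G i j ≤ hG.eigenvalues k * M := by
    simpa [dotProduct, mulVec] using
      hG.re_star_dotProduct_mulVec_le (fun i => hk i (mem_univ i)) (fun _ => 1)
  have hmin := card_sub_one_mul_inf'_le_sum_sub univ_nonempty hG.eigenvalues k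
  rw [Fintype.card_fin, htrace] at hmin
  have hM2 : (2 : ℝ) ≤ M := by exact_mod_cast hM
  have hN : (1 : ℝ) ≤ N := by exact_mod_cast NeZero.one_le
  have hlarge : (M : ℝ) ≤ N * hG.eigenvalues k := by
    refine le_of_mul_le_mul_left ?_ (by linarith : (0 : ℝ) < M)
    nlinarith
  rw [le_div_iff₀ (mul_pos (by linarith) (by linarith))]
  nlinarith [mul_le_mul_of_nonneg_left hmin (by linarith : (0 : ℝ) ≤ N)]

theorem stmt_9 {N M : ℕ} [NeZero N] [NeZero M] (hM : 1 < M) (φ : Fin M → Fin N → ℂ)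
    (hunit : ∀ i, cip (φ i) (φ i) = 1)
    (hframe : Submodule.span ℂ (Set.range φ) = ⊤)
    (hind : LinearIndependent ℝ fun i => outerProd (φ i))
    (G : Matrix (Fin M) (Fin M) ℝ)
    (hGdef : ∀ i j, G i j = ‖cip (φ i) (φ j)‖ ^ 2)
    (hG : G.IsHermitian) :
    Finset.univ.inf' Finset.univ_nonempty hG.eigenvalues ≤
      (M : ℝ) * ((N : ℝ) - 1) / ((N : ℝ) * ((M : ℝ) - 1)) :=
  stmt_9_general hM φ hunit G hGdef hG
end

section
/- Let T be an N×N positive semidefinite Hermitian matrix with orthonormal eigenbasis {e_i}_{i=1}^N and eigenvalues {λ_i}, and let I₊ = {i : λ_i > 0}. For a vector v ∈ ℂ^N, the (N+1)×(N+1) bordered matrix [[T, v],[v*, 1]] has the same rank as T if and only if v = Σ_{i ∈ I₊} a_i √λ_i e_i for some scalars {a_i}_{i ∈ I₊} with Σ_{i ∈ I₊} |a_i|² = 1. -/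
open scoped BigOperators
open Matrix

/-!
Write `M` for the bordered matrix. As `T` is a submatrix of the first `N` columns of `M`,
`rank M = rank T` forces the column space of `M` to be spanned by those columns, so the last
column `(v, 1)` equals `[T; v*] x` for some `x`: `T x = v` and `v* x = 1`. Conversely such an `x`
gives `M = P* T P` with `P = [1 | x]` (as `T` is Hermitian), so `rank M ≤ rank T`.
Diagonalising, `T = B B*` with `B = U diag(√λ)`, the columns of `U` being the `e i`. Then
`a := B* x` satisfies `B a = v` and `‖a‖² = x* B B* x = conj (v* x) = 1`, and conversely any such
`a = B* x` makes `x` a solution; the range of `B*` consists of the vectors supported on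
`{i | 0 < λ i}`.
-/

namespace Matrix

theorem range_mulVecLin_mul_eq_of_rank_mul_eq {m n p R : Type*} [Fintype n] [Fintype p] [Field R]
    {A : Matrix m n R} {B : Matrix n p R} (h : (A * B).rank = A.rank) :
    LinearMap.range (A * B).mulVecLin = LinearMap.range A.mulVecLin := by
  have hle : LinearMap.range (A * B).mulVecLin ≤ LinearMap.range A.mulVecLin := by
    rw [mulVecLin_mul]
    exact LinearMap.range_comp_le_range _ _
  exact Submodule.eq_of_le_of_finrank_eq hle h

theorem rank_fromBlocks_eq_rank_iff {n R : Type*} [Fintype n] [DecidableEq n] [Field R]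
    [StarRing R] {T : Matrix n n R} (hT : T.IsHermitian) (v : n → R) :
    (fromBlocks T (of fun i (_ : Unit) => v i) (of fun (_ : Unit) j => star (v j))
        (of fun _ _ => (1 : R))).rank = T.rank ↔
      ∃ x, T *ᵥ x = v ∧ star v ⬝ᵥ x = 1 := by
  set M := fromBlocks T (of fun i (_ : Unit) => v i) (of fun (_ : Unit) j => star (v j))
    (of fun _ _ => (1 : R))
  have hTM : T.rank ≤ M.rank := rank_submatrix_le M Sum.inl Sum.inl
  constructor
  · intro h
    let E : Matrix (n ⊕ Unit) n R := fromRows 1 0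
    have hME : (M * E).rank = M.rank := by
      refine le_antisymm (rank_mul_le_left _ _) (h ▸ ?_)
      have hT_sub : T = (M * E).submatrix Sum.inl id := by
        simp only [M, E, fromBlocks_mul_fromRows]
        ext i j
        simp
      exact hT_sub ▸ rank_submatrix_le _ _ _
    obtain ⟨x, hx⟩ : M *ᵥ Sum.elim 0 1 ∈ LinearMap.range (M * E).mulVecLin := by
      rw [range_mulVecLin_mul_eq_of_rank_mul_eq hME]
      exact ⟨_, rfl⟩
    have hx' : M *ᵥ Sum.elim x 0 = M *ᵥ Sum.elim 0 1 := by
      simpa [E, ← mulVec_mulVec, fromRows_mulVec] using hx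
    refine ⟨x, funext fun i => ?_, ?_⟩
    · simpa [M, fromBlocks_mulVec, mulVec, dotProduct] using congrFun hx' (Sum.inl i)
    · simpa [M, fromBlocks_mulVec, mulVec, dotProduct] using congrFun hx' (Sum.inr ())
  · rintro ⟨x, hTx, hvx⟩
    let P : Matrix n (n ⊕ Unit) R := fromCols 1 (replicateCol Unit x)
    have hxT : star x ᵥ* T = star v := by rw [← hTx, star_mulVec, hT.eq]
    have hM : M = Pᴴ * T * P := by
      rw [conjTranspose_fromCols_eq_fromRows_conjTranspose, conjTranspose_one,
        conjTranspose_replicateCol, fromRows_mul, fromRows_mul_fromCols, Matrix.one_mul,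
        Matrix.mul_one, Matrix.mul_one, ← replicateCol_mulVec, ← replicateRow_vecMul, hxT,
        replicateRow_mul_replicateCol, hTx, hvx]
      rfl
    refine le_antisymm ?_ hTM
    rw [hM]
    exact (rank_mul_le_left _ _).trans (rank_mul_le_right _ _)

theorem exists_mul_conjTranspose_mulVec_eq_iff {n k R : Type*} [Fintype n] [Fintype k]
    [CommRing R] [StarRing R] (B : Matrix n k R) (v : n → R) :
    (∃ x, (B * Bᴴ) *ᵥ x = v ∧ star v ⬝ᵥ x = 1) ↔
      ∃ a ∈ LinearMap.range Bᴴ.mulVecLin, B *ᵥ a = v ∧ star a ⬝ᵥ a = 1 := by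
  constructor
  · rintro ⟨x, hx, hvx⟩
    refine ⟨Bᴴ *ᵥ x, ⟨x, rfl⟩, by rwa [mulVec_mulVec], ?_⟩
    rw [star_mulVec, conjTranspose_conjTranspose, ← dotProduct_mulVec, mulVec_mulVec, hx,
      star_dotProduct, hvx, star_one]
  · rintro ⟨a, ⟨x, rfl⟩, hBa, ha⟩
    refine ⟨x, by rwa [← mulVec_mulVec], ?_⟩
    rwa [← hBa, star_mulVec, ← dotProduct_mulVec]

theorem mem_range_diagonal_mulVecLin_iff {n R : Type*} [Fintype n] [DecidableEq n] [Field R]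
    (d a : n → R) : a ∈ LinearMap.range (diagonal d).mulVecLin ↔ ∀ i, d i = 0 → a i = 0 := by
  constructor
  · rintro ⟨y, rfl⟩ i hi
    simp [mulVec_diagonal, hi]
  · intro h
    refine ⟨fun i => a i / d i, funext fun i => ?_⟩
    by_cases hi : d i = 0
    · simp [mulVec_diagonal, hi, h i hi]
    · simp [mulVec_diagonal, mul_div_cancel₀ _ hi]

theorem range_mulVecLin_mul_of_mul_eq_one {m n k R : Type*} [Fintype n] [Fintype k]
    [DecidableEq n] [CommRing R] (A : Matrix m n R) {U : Matrix n k R} {V : Matrix k n R}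
    (hUV : U * V = 1) : LinearMap.range (A * U).mulVecLin = LinearMap.range A.mulVecLin := by
  rw [mulVecLin_mul, LinearMap.range_comp_of_range_eq_top]
  exact LinearMap.range_eq_top.mpr fun y => ⟨V *ᵥ y, by simp [mulVec_mulVec, hUV]⟩

theorem star_dotProduct_self_eq_one_iff {n : Type*} [Fintype n] (a : n → ℂ) :
    star a ⬝ᵥ a = 1 ↔ ∑ i, ‖a i‖ ^ 2 = 1 := by
  simp only [dotProduct, Pi.star_apply, Complex.star_def, Complex.conj_mul']
  exact_mod_cast Iff.rfl

theorem transpose_of_mulVec {n R : Type*} [Fintype n] [CommSemiring R] (e : n → n → R)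
    (w : n → R) : (of e)ᵀ *ᵥ w = ∑ i, w i • e i := by
  rw [mulVec_transpose, vecMul_eq_sum]
  rfl

theorem conjTranspose_mul_self_eq_one_of_cip {N : ℕ} {e : Fin N → Fin N → ℂ}
    (horth : ∀ i j, cip (e i) (e j) = if i = j then 1 else 0) :
    (of e)ᵀᴴ * (of e)ᵀ = 1 := by
  ext i j
  simpa [mul_apply, one_apply, cip, mul_comm, eq_comm] using horth j i

theorem mul_transpose_of_eq_mul_diagonal {n R : Type*} [Fintype n] [DecidableEq n]
    [CommSemiring R] {T : Matrix n n R} {e : n → n → R} {μ : n → R}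
    (heig : ∀ i, T *ᵥ e i = μ i • e i) : T * (of e)ᵀ = (of e)ᵀ * diagonal μ := by
  ext j i
  rw [mul_diagonal]
  simpa [mul_apply, mulVec, dotProduct, mul_comm] using congrFun (heig i) j

section Spectral

variable {n : Type*} [Fintype n] [DecidableEq n] {T U : Matrix n n ℂ} {lam : n → ℝ}

open scoped ComplexOrder in
theorem nonneg_of_posSemidef_of_mul_eq_mul_diagonal (hT : T.PosSemidef) (hU : Uᴴ * U = 1)
    (hTU : T * U = U * diagonal fun i => (lam i : ℂ)) (i : n) : 0 ≤ lam i := by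
  have hD := hT.conjTranspose_mul_mul_same U
  rw [Matrix.mul_assoc, hTU, ← Matrix.mul_assoc, hU, Matrix.one_mul,
    posSemidef_diagonal_iff] at hD
  exact_mod_cast hD i

theorem eq_mul_conjTranspose_of_mul_eq_mul_diagonal (hU : Uᴴ * U = 1)
    (hTU : T * U = U * diagonal fun i => (lam i : ℂ)) (hlam : ∀ i, 0 ≤ lam i) :
    T = (U * diagonal fun i => (√(lam i) : ℂ)) * (U * diagonal fun i => (√(lam i) : ℂ))ᴴ := by
  have hss : ((diagonal fun i => (√(lam i) : ℂ)) * diagonal fun i => star (√(lam i) : ℂ)) =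
      diagonal fun i => (lam i : ℂ) := by
    rw [diagonal_mul_diagonal]
    congr 1
    funext i
    rw [Complex.star_def, Complex.conj_ofReal, ← Complex.ofReal_mul, Real.mul_self_sqrt (hlam i)]
  rw [conjTranspose_mul, diagonal_conjTranspose, Matrix.mul_assoc,
    ← Matrix.mul_assoc (diagonal _), Pi.star_def, hss, ← Matrix.mul_assoc, ← hTU,
    Matrix.mul_assoc, mul_eq_one_comm.mp hU, Matrix.mul_one]

end Spectral

end Matrix

open scoped ComplexOrder in
theorem stmt_19 {N : ℕ} (T : Matrix (Fin N) (Fin N) ℂ) (hT : T.PosSemidef)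
    (e : Fin N → Fin N → ℂ) (lam : Fin N → ℝ)
    (horth : ∀ i j, cip (e i) (e j) = if i = j then 1 else 0)
    (heig : ∀ i, T.mulVec (e i) = (lam i : ℂ) • e i)
    (v : Fin N → ℂ) :
    (Matrix.fromBlocks T (Matrix.of fun i (_ : Unit) => v i)
        (Matrix.of fun (_ : Unit) j => star (v j)) (Matrix.of fun _ _ => (1 : ℂ))).rank =
        T.rank ↔
      ∃ a : Fin N → ℂ, (∀ i, ¬ 0 < lam i → a i = 0) ∧
        (∑ i, ‖a i‖ ^ 2 = 1) ∧
        v = ∑ i, (a i * (Real.sqrt (lam i) : ℂ)) • e i := by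
  have hU := conjTranspose_mul_self_eq_one_of_cip horth
  have hTU := mul_transpose_of_eq_mul_diagonal heig
  set s : Fin N → ℂ := fun i => (√(lam i) : ℂ)
  set B := (of e)ᵀ * diagonal s
  have hTB : T = B * Bᴴ := eq_mul_conjTranspose_of_mul_eq_mul_diagonal hU hTU
    (nonneg_of_posSemidef_of_mul_eq_mul_diagonal hT hU hTU)
  have hrange : LinearMap.range Bᴴ.mulVecLin = LinearMap.range (diagonal s).mulVecLin := by
    rw [conjTranspose_mul, diagonal_conjTranspose, range_mulVecLin_mul_of_mul_eq_one _ hU]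
    congr
    exact funext fun i => Complex.conj_ofReal _
  rw [rank_fromBlocks_eq_rank_iff hT.isHermitian, hTB, exists_mul_conjTranspose_mulVec_eq_iff,
    hrange]
  refine exists_congr fun a => ?_
  have hs0 : ∀ i, s i = 0 ↔ ¬ 0 < lam i := fun i => by simp [s, Real.sqrt_eq_zero']
  have hBa : B *ᵥ a = ∑ i, (a i * s i) • e i := by
    rw [← mulVec_mulVec, transpose_of_mulVec]
    simp only [mulVec_diagonal, mul_comm]
  rw [mem_range_diagonal_mulVecLin_iff, star_dotProduct_self_eq_one_iff, hBa, eq_comm (a := v)]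
  simp only [hs0]
  exact and_congr_right' and_comm
end
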